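/- arXiv:2112.01256 — 3 statements merged into one kernel-verified Lean document; each statement's English description precedes it below -/
import Mathlib

section
/- Let n, g, p, k be natural numbers with n ≥ 1, k ≥ 1, and let n_1, ..., n_k be positive integers each dividing n with n_i < n (hence n_i ≤ n/2). If 2p + Σ_{i=1}^k n_i - 2 = n(2g + k - 2), then p > n(g-1) + 1 (as integers). -/
theorem stmt_1 (n g p k : ℕ) (hn : 1 ≤ n) (hk : 1 ≤ k) (ni : Fin k → ℕ)
    (hdvd : ∀ i, ni i ∣ n) (hpos : ∀ i, 0 < ni i) (hlt : ∀ i, ni i < n)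
    (heq : 2 * (p : ℤ) + (∑ i, (ni i : ℤ)) - 2 = (n : ℤ) * (2 * (g : ℤ) + (k : ℤ) - 2)) :
    (p : ℤ) > (n : ℤ) * ((g : ℤ) - 1) + 1 := by
  have h1 : ∀ i, 2 * (ni i : ℤ) ≤ (n : ℤ) := by
    intro i
    obtain ⟨c, hc⟩ := hdvd i
    have hl := hlt i
    have hp := hpos i
    have hc2 : 2 ≤ c := by
      rcases Nat.lt_or_ge c 2 with h | h
      · interval_cases c <;> omega
      · exact h
    have : ni i * 2 ≤ ni i * c := Nat.mul_le_mul_left _ hc2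
    have : 2 * ni i ≤ n := by omega
    exact_mod_cast this
  have h2 : ∑ i, 2 * (ni i : ℤ) ≤ ∑ _i : Fin k, (n : ℤ) :=
    Finset.sum_le_sum fun i _ => h1 i
  have h3 : ∑ i, (1 : ℤ) ≤ ∑ i, (ni i : ℤ) :=
    Finset.sum_le_sum fun i _ => by exact_mod_cast hpos i
  simp [Finset.mul_sum, Finset.sum_const] at h2 h3
  have hk' : (1 : ℤ) ≤ (k : ℤ) := by exact_mod_cast hk
  have h2' : 2 * ∑ i, (ni i : ℤ) ≤ (k : ℤ) * n := by
    rw [Finset.mul_sum]; exact h2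
  linarith
end

section
/- Suppose n ≥ 2, k = 4, and n_1, n_2, n_3, n_4 are positive divisors of n with n_i < n, satisfying n·4 = n_1 + n_2 + n_3 + n_4 + 2n and gcd(n_1·d_1, n_2·d_2, n_3·d_3, n_4·d_4, n) = 1 for some positive integers d_i. Then n = 2 and n_1 = n_2 = n_3 = n_4 = 1. -/
lemma two_mul_le_of_dvd_lt {a n : ℕ} (h : a ∣ n) (hlt : a < n) : 2 * a ≤ n := by
  obtain ⟨c, rfl⟩ := h
  have hc : 2 ≤ c := by
    rcases c with _ | _ | c
    · omega
    · omega
    · omega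
  calc 2 * a ≤ a * c := by nlinarith
    _ = a * c := rfl

theorem stmt_3 (n n₁ n₂ n₃ n₄ d₁ d₂ d₃ d₄ : ℕ) (hn : 2 ≤ n)
    (h₁ : n₁ ∣ n) (h₂ : n₂ ∣ n) (h₃ : n₃ ∣ n) (h₄ : n₄ ∣ n)
    (hp₁ : 0 < n₁) (hp₂ : 0 < n₂) (hp₃ : 0 < n₃) (hp₄ : 0 < n₄)
    (hl₁ : n₁ < n) (hl₂ : n₂ < n) (hl₃ : n₃ < n) (hl₄ : n₄ < n)
    (hd₁ : 0 < d₁) (hd₂ : 0 < d₂) (hd₃ : 0 < d₃) (hd₄ : 0 < d₄)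
    (heq : n * 4 = n₁ + n₂ + n₃ + n₄ + 2 * n)
    (hgcd : Nat.gcd (n₁ * d₁) (Nat.gcd (n₂ * d₂) (Nat.gcd (n₃ * d₃) (Nat.gcd (n₄ * d₄) n))) = 1) :
    n = 2 ∧ n₁ = 1 ∧ n₂ = 1 ∧ n₃ = 1 ∧ n₄ = 1 := by
  have e₁ := two_mul_le_of_dvd_lt h₁ hl₁
  have e₂ := two_mul_le_of_dvd_lt h₂ hl₂
  have e₃ := two_mul_le_of_dvd_lt h₃ hl₃
  have e₄ := two_mul_le_of_dvd_lt h₄ hl₄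
  have hne : n₁ = n₂ ∧ n₂ = n₃ ∧ n₃ = n₄ ∧ 2 * n₁ = n := by omega
  obtain ⟨e12, e23, e34, h2n⟩ := hne
  have hdvd : n₁ ∣ Nat.gcd (n₁ * d₁) (Nat.gcd (n₂ * d₂) (Nat.gcd (n₃ * d₃) (Nat.gcd (n₄ * d₄) n))) := by
    refine Nat.dvd_gcd (dvd_mul_right _ _) ?_
    refine Nat.dvd_gcd (e12 ▸ dvd_mul_right _ _) ?_
    refine Nat.dvd_gcd ((e12.trans e23) ▸ dvd_mul_right _ _) ?_
    exact Nat.dvd_gcd ((e12.trans (e23.trans e34)) ▸ dvd_mul_right _ _) h₁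
  rw [hgcd] at hdvd
  have : n₁ = 1 := Nat.eq_one_of_dvd_one hdvd
  omega
end

section
/- Up to ℤ-similarity (conjugation by matrices in GL(2, ℤ)), there are exactly six non-identity periodic elements of GL(2, ℤ) of finite order, represented by: [[-1,0],[0,-1]] (order 2), [[1,0],[0,-1]] (order 2), [[1,1],[0,-1]] (order 2), [[0,1],[-1,0]] (order 4), [[0,1],[-1,-1]] (order 3), [[0,-1],[1,1]] (order 6); and no two of these six matrices are ℤ-similar to each other. -/
/-- Two integer matrices are ℤ-similar if they are conjugate by a matrix invertible over ℤ. -/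
def ZSimilar (A B : Matrix (Fin 2) (Fin 2) ℤ) : Prop :=
  ∃ S : Matrix (Fin 2) (Fin 2) ℤ, IsUnit S ∧ B = S⁻¹ * A * S

/-- The six representatives of periodic (finite-order, non-identity) elements of GL(2, ℤ). -/
def periodicReps : Fin 6 → Matrix (Fin 2) (Fin 2) ℤ :=
  ![!![-1, 0; 0, -1], !![1, 0; 0, -1], !![1, 1; 0, -1],
    !![0, 1; -1, 0], !![0, 1; -1, -1], !![0, -1; 1, 1]]

section Infrastructure

lemma zsim_of {A B : Matrix (Fin 2) (Fin 2) ℤ} (S : Matrix (Fin 2) (Fin 2) ℤ)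
    (hS : IsUnit S.det) (h : S * B = A * S) : ZSimilar A B := by
  refine ⟨S, (Matrix.isUnit_iff_isUnit_det S).2 hS, ?_⟩
  calc B = (S⁻¹ * S) * B := by rw [Matrix.nonsing_inv_mul S hS, Matrix.one_mul]
  _ = S⁻¹ * (A * S) := by rw [Matrix.mul_assoc, h]
  _ = S⁻¹ * A * S := by rw [Matrix.mul_assoc]

lemma zsim_symm {A B : Matrix (Fin 2) (Fin 2) ℤ} (h : ZSimilar A B) : ZSimilar B A := by
  obtain ⟨S, hS, rfl⟩ := h
  have hd : IsUnit S.det := (Matrix.isUnit_iff_isUnit_det S).1 hS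
  refine zsim_of S⁻¹ (S.isUnit_nonsing_inv_det hd) ?_
  rw [Matrix.mul_assoc, Matrix.mul_nonsing_inv S hd, Matrix.mul_one]

lemma zsim_trans {A B C : Matrix (Fin 2) (Fin 2) ℤ} (h1 : ZSimilar A B) (h2 : ZSimilar B C) :
    ZSimilar A C := by
  obtain ⟨S, hS, rfl⟩ := h1
  obtain ⟨T, hT, rfl⟩ := h2
  exact ⟨S * T, hS.mul hT, by rw [Matrix.mul_inv_rev]; noncomm_ring⟩

lemma zsim_trace {A B : Matrix (Fin 2) (Fin 2) ℤ} (h : ZSimilar A B) : B.trace = A.trace := by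
  obtain ⟨S, hS, rfl⟩ := h
  have hd : IsUnit S.det := (Matrix.isUnit_iff_isUnit_det S).1 hS
  rw [Matrix.trace_mul_cycle, Matrix.mul_nonsing_inv S hd, Matrix.one_mul]

lemma zsim_det {A B : Matrix (Fin 2) (Fin 2) ℤ} (h : ZSimilar A B) : B.det = A.det := by
  obtain ⟨S, hS, rfl⟩ := h
  have hd : IsUnit S.det := (Matrix.isUnit_iff_isUnit_det S).1 hS
  rw [Matrix.det_mul, Matrix.det_mul, Matrix.det_nonsing_inv]
  have h1 : Ring.inverse S.det * S.det = 1 := Ring.inverse_mul_cancel _ hd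
  linear_combination A.det * h1

lemma zsim_mod2 {A B : Matrix (Fin 2) (Fin 2) ℤ} (h : ZSimilar A B)
    (hA : ∃ C, A = 1 + 2 • C) : ∃ C, B = 1 + 2 • C := by
  obtain ⟨S, hS, rfl⟩ := h
  have hd : IsUnit S.det := (Matrix.isUnit_iff_isUnit_det S).1 hS
  obtain ⟨C, rfl⟩ := hA
  refine ⟨S⁻¹ * C * S, ?_⟩
  rw [Matrix.mul_add, Matrix.add_mul, Matrix.mul_one, Matrix.nonsing_inv_mul S hd,
    Matrix.mul_smul, Matrix.smul_mul]

lemma mat2_eq {a b c d e f g h : ℤ} (h1 : a = e) (h2 : b = f) (h3 : c = g) (h4 : d = h) :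
    !![a,b;c,d] = !![e,f;g,h] := by subst h1 h2 h3 h4; rfl

/-- Cayley–Hamilton for 2×2 integer matrices. -/
lemma CH2 (a b c d : ℤ) : !![a,b;c,d] * !![a,b;c,d]
    = (a+d) • !![a,b;c,d] - (a*d - b*c) • (1 : Matrix (Fin 2) (Fin 2) ℤ) := by
  rw [Matrix.mul_fin_two, Matrix.one_fin_two, Matrix.smul_of, Matrix.smul_cons, Matrix.smul_cons]
  ext i j
  fin_cases i <;> fin_cases j <;> simp <;> ring

lemma nilpow (N : Matrix (Fin 2) (Fin 2) ℤ) (hN : N*N = 0) (n : ℕ) :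
    (1 + N)^n = 1 + (n:ℤ) • N := by
  induction n with
  | zero => simp
  | succ n ih =>
    rw [pow_succ, ih, Matrix.add_mul, Matrix.mul_add, Matrix.mul_add, Matrix.one_mul,
      Matrix.mul_one, Matrix.smul_mul, hN, smul_zero, add_zero]
    push_cast
    rw [add_smul, one_smul, one_mul]
    abel

end Infrastructure

section QuadraticForms

lemma exists_shift (p q : ℤ) (hp : 0 < p) : ∃ t : ℤ, (q + 2*p*t) ^ 2 ≤ p ^ 2 := by
  refine ⟨-((q+p)/(2*p)), ?_⟩
  have h1 : q + 2*p*(-((q+p)/(2*p))) = (q+p) % (2*p) - p := by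
    rw [Int.emod_def]; ring
  have h2 : 0 ≤ (q+p) % (2*p) := Int.emod_nonneg _ (by positivity)
  have h3 : (q+p) % (2*p) < 2*p := Int.emod_lt_of_pos _ (by linarith)
  rw [h1]; nlinarith

lemma formRep (k : ℤ) (hk : k = 3 ∨ k = 4) : ∀ N : ℕ, ∀ p q r : ℤ, 0 < p →
    (p + r).toNat ≤ N → 4*p*r - q^2 = k → ∃ x y : ℤ, p*x^2 + q*x*y + r*y^2 = 1 := by
  have hk3 : 3 ≤ k := by rcases hk with rfl | rfl <;> norm_num
  have hk4 : k ≤ 4 := by rcases hk with rfl | rfl <;> norm_num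
  intro N
  induction N with
  | zero =>
    intro p q r hp hN hform
    have hr : 0 < r := by nlinarith
    omega
  | succ N ih =>
    intro p q r hp hN hform
    have hr : 0 < r := by nlinarith
    rcases eq_or_lt_of_le (show (1:ℤ) ≤ p from hp) with hp1 | hp2
    · exact ⟨1, 0, by nlinarith⟩
    rcases eq_or_lt_of_le (show (1:ℤ) ≤ r from hr) with hr1 | hr2
    · exact ⟨0, 1, by nlinarith⟩
    rcases le_or_gt p r with hpr | hpr
    · obtain ⟨t, ht⟩ := exists_shift p q hp
      set q' := q + 2*p*t with hq'
      set r' := p*t^2 + q*t + r with hr'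
      have hform' : 4*p*r' - q'^2 = k := by rw [hq', hr']; linear_combination hform
      have hr'pos : 0 < r' := by nlinarith
      have hr'lt : r' < r := by nlinarith
      obtain ⟨x, y, hxy⟩ := ih p q' r' hp (by omega) hform'
      exact ⟨x + t*y, y, by linear_combination hxy⟩
    · obtain ⟨t, ht⟩ := exists_shift r q hr
      set q' := q + 2*r*t with hq'
      set p' := r*t^2 + q*t + p with hp'
      have hform' : 4*p'*r - q'^2 = k := by rw [hq', hp']; linear_combination hform
      have hp'pos : 0 < p' := by nlinarith
      have hp'lt : p' < p := by nlinarith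
      obtain ⟨x, y, hxy⟩ := ih p' q' r hp'pos (by omega) hform'
      exact ⟨x, y + t*x, by linear_combination hxy⟩

lemma getQ (p q r : ℤ) (hp : p ≠ 0) (hk : 4*p*r - q^2 = 3 ∨ 4*p*r - q^2 = 4) :
    ∃ x y e : ℤ, (e = 1 ∨ e = -1) ∧ p*x^2 + q*x*y + r*y^2 = e := by
  set k := 4*p*r - q^2 with hkdef
  have hkk : k = 3 ∨ k = 4 := hk
  rcases lt_or_gt_of_ne hp with hneg | hpos
  · obtain ⟨x, y, hxy⟩ := formRep k hkk ((-p) + (-r)).toNat (-p) (-q) (-r) (by omega)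
      le_rfl (by rw [hkdef]; ring)
    exact ⟨x, y, -1, Or.inr rfl, by linear_combination -hxy⟩
  · obtain ⟨x, y, hxy⟩ := formRep k hkk (p + r).toNat p q r hpos le_rfl (by rw [hkdef])
    exact ⟨x, y, 1, Or.inl rfl, hxy⟩

end QuadraticForms

section Cases

lemma case_ord4 (a b c d : ℤ) (hδ : a*d - b*c = 1) (ht : a + d = 0) :
    ZSimilar !![a,b;c,d] !![0,1;-1,0] := by
  have hc : c ≠ 0 := by intro h; rw [h] at hδ; nlinarith [sq_nonneg (a-d), sq_nonneg (a+d)]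
  obtain ⟨x, y, e, he, hQ⟩ := getQ c (d-a) (-b) hc (by right; nlinarith)
  refine zsim_of !![x, -(a*x+b*y); y, -(c*x+d*y)] ?_ ?_
  · rw [Matrix.det_fin_two_of, Int.isUnit_iff]
    rcases he with rfl | rfl
    · right; linear_combination -hQ
    · left; linear_combination -hQ
  · rw [Matrix.mul_fin_two, Matrix.mul_fin_two]
    refine mat2_eq (by ring) ?_ (by ring) ?_
    · linear_combination (-x)*hδ + (a*x+b*y)*ht
    · linear_combination (-y)*hδ + (c*x+d*y)*ht

lemma case_ord3 (a b c d : ℤ) (hδ : a*d - b*c = 1) (ht : a + d = -1) :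
    ZSimilar !![a,b;c,d] !![0,1;-1,-1] := by
  have hc : c ≠ 0 := by intro h; rw [h] at hδ; nlinarith [sq_nonneg (a-d), sq_nonneg (a+d)]
  obtain ⟨x, y, e, he, hQ⟩ := getQ c (d-a) (-b) hc (by left; nlinarith)
  refine zsim_of !![x, -(a*x+b*y); y, -(c*x+d*y)] ?_ ?_
  · rw [Matrix.det_fin_two_of, Int.isUnit_iff]
    rcases he with rfl | rfl
    · right; linear_combination -hQ
    · left; linear_combination -hQ
  · rw [Matrix.mul_fin_two, Matrix.mul_fin_two]
    refine mat2_eq (by ring) ?_ (by ring) ?_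
    · linear_combination (-x)*hδ + (a*x+b*y)*ht
    · linear_combination (-y)*hδ + (c*x+d*y)*ht

lemma case_ord6 (a b c d : ℤ) (hδ : a*d - b*c = 1) (ht : a + d = 1) :
    ZSimilar !![a,b;c,d] !![0,-1;1,1] := by
  have hc : c ≠ 0 := by intro h; rw [h] at hδ; nlinarith [sq_nonneg (a-d), sq_nonneg (a+d)]
  obtain ⟨x, y, e, he, hQ⟩ := getQ c (d-a) (-b) hc (by left; nlinarith)
  refine zsim_of !![x, a*x+b*y; y, c*x+d*y] ?_ ?_
  · rw [Matrix.det_fin_two_of, Int.isUnit_iff]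
    rcases he with rfl | rfl
    · left; linear_combination hQ
    · right; linear_combination hQ
  · rw [Matrix.mul_fin_two, Matrix.mul_fin_two]
    refine mat2_eq (by ring) ?_ (by ring) ?_
    · linear_combination x*hδ + (-(a*x+b*y))*ht
    · linear_combination y*hδ + (-(c*x+d*y))*ht

lemma case_refl (a b c d : ℤ) (hδ : a*d - b*c = -1) (ht : a + d = 0) :
    ZSimilar !![a,b;c,d] !![1,0;0,-1] ∨ ZSimilar !![a,b;c,d] !![1,1;0,-1] := by
  obtain ⟨u1, u2, hu, he1, he2⟩ :
      ∃ u1 u2 : ℤ, ¬(u1 = 0 ∧ u2 = 0) ∧ a*u1 + b*u2 = u1 ∧ c*u1 + d*u2 = u2 := by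
    by_cases h : a + 1 = 0 ∧ c = 0
    · exact ⟨b, 1 - a, fun ⟨_, h2⟩ => by omega,
        by ring, by linear_combination (-1)*hδ + ht⟩
    · exact ⟨a + 1, c, fun ⟨h1, h2⟩ => h ⟨h1, h2⟩,
        by linear_combination (-1)*hδ + a*ht, by linear_combination c*ht⟩
  set g : ℤ := (Int.gcd u1 u2 : ℤ) with hg
  have hgpos : 0 < g := by
    have h2 : 0 < Int.gcd u1 u2 := Int.gcd_pos_iff.2 (by tauto)
    simp only [hg]
    exact_mod_cast h2
  have hgne : g ≠ 0 := ne_of_gt hgpos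
  set v1 : ℤ := u1 / g with hv1
  set v2 : ℤ := u2 / g with hv2
  have hu1 : u1 = g * v1 := (Int.mul_ediv_cancel' (Int.gcd_dvd_left u1 u2)).symm
  have hu2 : u2 = g * v2 := (Int.mul_ediv_cancel' (Int.gcd_dvd_right u1 u2)).symm
  have he1v : a*v1 + b*v2 = v1 := by
    apply mul_left_cancel₀ hgne
    linear_combination he1 + (1-a)*hu1 - b*hu2
  have he2v : c*v1 + d*v2 = v2 := by
    apply mul_left_cancel₀ hgne
    linear_combination he2 + (1-d)*hu2 - c*hu1
  have hbez : g = u1 * (Int.gcdA u1 u2) + u2 * (Int.gcdB u1 u2) := by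
    rw [hg]; exact Int.gcd_eq_gcd_ab u1 u2
  set q : ℤ := Int.gcdA u1 u2 with hqdef
  set p : ℤ := -(Int.gcdB u1 u2) with hpdef
  have hS : v1*q - v2*p = 1 := by
    apply mul_left_cancel₀ hgne
    linear_combination (-1)*hbez + (-q)*hu1 + p*hu2
  set m : ℤ := q*(a*p + b*q) - p*(c*p + d*q) with hm
  have hβ : v1*(c*p+d*q) - v2*(a*p+b*q) = -1 := by
    linear_combination (-q)*he1v + p*he2v + (q*v1 - p*v2)*ht - hS
  have I1 : a*p + b*q = m*v1 - p := by
    linear_combination p*hβ - (a*p+b*q)*hS - v1*hm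
  have I2 : c*p + d*q = m*v2 - q := by
    linear_combination q*hβ - (c*p+d*q)*hS - v2*hm
  have hAS : !![a,b;c,d] * !![v1,p;v2,q] = !![v1,p;v2,q] * !![1,m;0,-1] := by
    rw [Matrix.mul_fin_two, Matrix.mul_fin_two]
    exact mat2_eq (by linear_combination he1v) (by linear_combination I1)
      (by linear_combination he2v) (by linear_combination I2)
  have hdetS' : ∀ s : ℤ, IsUnit (Matrix.det (!![v1,p;v2,q] * !![1,s;0,1])) := by
    intro s
    rw [Matrix.det_mul, Matrix.det_fin_two_of, Matrix.det_fin_two_of, Int.isUnit_iff]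
    left; linear_combination hS
  rcases Int.even_or_odd m with ⟨s, hs⟩ | ⟨s, hs⟩
  · left
    refine zsim_of (!![v1,p;v2,q] * !![1,-s;0,1]) (hdetS' (-s)) ?_
    have hMU : !![1,-s;0,1] * !![1,0;0,-1] = !![1,m;0,-1] * !![1,-s;0,1] := by
      rw [Matrix.mul_fin_two, Matrix.mul_fin_two]
      exact mat2_eq (by ring) (by linear_combination -hs) (by ring) (by ring)
    calc !![v1,p;v2,q] * !![1,-s;0,1] * !![1,0;0,-1]
        = !![v1,p;v2,q] * (!![1,-s;0,1] * !![1,0;0,-1]) := by rw [Matrix.mul_assoc]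
      _ = !![v1,p;v2,q] * (!![1,m;0,-1] * !![1,-s;0,1]) := by rw [hMU]
      _ = !![v1,p;v2,q] * !![1,m;0,-1] * !![1,-s;0,1] := by rw [Matrix.mul_assoc]
      _ = !![a,b;c,d] * !![v1,p;v2,q] * !![1,-s;0,1] := by rw [hAS]
      _ = !![a,b;c,d] * (!![v1,p;v2,q] * !![1,-s;0,1]) := by rw [Matrix.mul_assoc]
  · right
    refine zsim_of (!![v1,p;v2,q] * !![1,-s;0,1]) (hdetS' (-s)) ?_
    have hMU : !![1,-s;0,1] * !![1,1;0,-1] = !![1,m;0,-1] * !![1,-s;0,1] := by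
      rw [Matrix.mul_fin_two, Matrix.mul_fin_two]
      exact mat2_eq (by ring) (by linear_combination -hs) (by ring) (by ring)
    calc !![v1,p;v2,q] * !![1,-s;0,1] * !![1,1;0,-1]
        = !![v1,p;v2,q] * (!![1,-s;0,1] * !![1,1;0,-1]) := by rw [Matrix.mul_assoc]
      _ = !![v1,p;v2,q] * (!![1,m;0,-1] * !![1,-s;0,1]) := by rw [hMU]
      _ = !![v1,p;v2,q] * !![1,m;0,-1] * !![1,-s;0,1] := by rw [Matrix.mul_assoc]
      _ = !![a,b;c,d] * !![v1,p;v2,q] * !![1,-s;0,1] := by rw [hAS]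
      _ = !![a,b;c,d] * (!![v1,p;v2,q] * !![1,-s;0,1]) := by rw [Matrix.mul_assoc]

end Cases

section TraceBound

lemma traceGrow (u δ : ℤ) (s : ℕ → ℤ) (h0 : s 0 = 2) (h1 : s 1 = u)
    (hrec : ∀ k, s (k+2) = u * s (k+1) - δ * s k)
    (hcase : (δ = 1 ∧ 3 ≤ u) ∨ (δ = -1 ∧ 1 ≤ u)) :
    ∀ n, 2 ≤ n → 3 ≤ s n := by
  rcases hcase with ⟨rfl, hu⟩ | ⟨rfl, hu⟩
  · have key : ∀ k, s k + 1 ≤ s (k+1) ∧ 2 ≤ s k := by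
      intro k
      induction k with
      | zero => simp only [Nat.zero_add]; omega
      | succ k ihk =>
        have h2 := hrec k
        have e : k + 1 + 1 = k + 2 := rfl
        rw [e]
        constructor <;> nlinarith [ihk.1, ihk.2]
    intro n hn
    obtain ⟨m, rfl⟩ : ∃ m, n = m + 2 := ⟨n - 2, by omega⟩
    have k1 := (key (m+1)).1
    have k0 := (key (m+1)).2
    have e : m + 1 + 1 = m + 2 := rfl
    rw [e] at k1
    omega
  · have key : ∀ k, 1 ≤ s k ∧ 1 ≤ s (k+1) ∧ 3 ≤ s k + s (k+1) := by
      intro k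
      induction k with
      | zero => simp only [Nat.zero_add]; omega
      | succ k ihk =>
        have h2 := hrec k
        have e : k + 1 + 1 = k + 2 := rfl
        rw [e]
        obtain ⟨a, b, c⟩ := ihk
        refine ⟨b, by nlinarith, by nlinarith⟩
    intro n hn
    obtain ⟨m, rfl⟩ : ∃ m, n = m + 2 := ⟨n - 2, by omega⟩
    have h2 := hrec m
    obtain ⟨a, b, c⟩ := key m
    nlinarith

lemma traceBound (A : Matrix (Fin 2) (Fin 2) ℤ) (u δ : ℤ)
    (hCH : A*A = u • A - δ • (1 : Matrix (Fin 2) (Fin 2) ℤ)) (htr : A.trace = u)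
    (hcase : (δ = 1 ∧ (3 ≤ u ∨ u ≤ -3)) ∨ (δ = -1 ∧ u ≠ 0))
    (n : ℕ) (hn : 2 ≤ n) (hAn : A^n = 1) : False := by
  set s : ℕ → ℤ := fun k => (A^k).trace with hs
  have h0 : s 0 = 2 := by simp only [hs]; rw [pow_zero, Matrix.trace_one]; rfl
  have h1 : s 1 = u := by simp only [hs]; rw [pow_one, htr]
  have hrec : ∀ k, s (k+2) = u * s (k+1) - δ * s k := by
    intro k
    have e1 : A^(k+2) = A^k * (A*A) := by rw [pow_add, pow_two]
    have e2 : A^(k+1) = A^k * A := pow_succ A k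
    simp only [hs]
    rw [e1, hCH, Matrix.mul_sub, Matrix.mul_smul, Matrix.mul_smul, Matrix.mul_one,
      Matrix.trace_sub, Matrix.trace_smul, Matrix.trace_smul, e2, smul_eq_mul, smul_eq_mul]
  have hs2 : s n = 2 := by simp only [hs]; rw [hAn, Matrix.trace_one]; rfl
  -- pass to the sequence with sign-flipped u if u is negative
  have hpos : ∃ s' : ℕ → ℤ, s' 0 = 2 ∧ (s' n = 2 ∨ s' n = -2) ∧
      ((δ = 1 ∧ 3 ≤ (s' 1)) ∨ (δ = -1 ∧ 1 ≤ (s' 1))) ∧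
      (∀ k, s' (k+2) = (s' 1) * s' (k+1) - δ * s' k) := by
    rcases le_or_gt 0 u with hu | hu
    · refine ⟨s, h0, Or.inl hs2, ?_, by rw [h1]; exact hrec⟩
      rcases hcase with ⟨h5, h6⟩ | ⟨h5, h6⟩
      · exact Or.inl ⟨h5, by rw [h1]; omega⟩
      · exact Or.inr ⟨h5, by rw [h1]; omega⟩
    · refine ⟨fun k => (-1)^k * s k, by simpa using h0, ?_, ?_, ?_⟩
      · beta_reduce
        rcases Nat.even_or_odd n with he | he
        · left; rw [he.neg_one_pow, one_mul, hs2]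
        · right; rw [he.neg_one_pow, hs2]; ring
      · beta_reduce
        have e1 : ((-1:ℤ))^(1:ℕ) * s 1 = -u := by rw [h1]; ring
        rcases hcase with ⟨h5, h6⟩ | ⟨h5, h6⟩
        · exact Or.inl ⟨h5, by rw [e1]; omega⟩
        · exact Or.inr ⟨h5, by rw [e1]; omega⟩
      · intro k
        beta_reduce
        have e1 : ((-1:ℤ))^(1:ℕ) * s 1 = -u := by rw [h1]; ring
        rw [e1]
        have e2 : ((-1:ℤ))^(k+2) = (-1)^k := by rw [pow_add]; ring
        have e3 : ((-1:ℤ))^(k+1) = -(-1)^k := by rw [pow_succ]; ring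
        rw [e2, e3]
        linear_combination ((-1:ℤ)^k) * hrec k
  obtain ⟨s', h0', hn', hcase', hrec'⟩ := hpos
  have h3 := traceGrow (s' 1) δ s' h0' rfl hrec' hcase' n hn
  omega

end TraceBound

section Nilpotent

/-- trace 2, det 1, finite order : must be the identity. -/
lemma case_unip (a b c d : ℤ) (hδ : a*d - b*c = 1) (ht : a + d = 2)
    (n : ℕ) (hn : 0 < n) (hAn : (!![a,b;c,d] : Matrix (Fin 2) (Fin 2) ℤ)^n = 1) :
    (!![a,b;c,d] : Matrix (Fin 2) (Fin 2) ℤ) = 1 := by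
  set M : Matrix (Fin 2) (Fin 2) ℤ := !![a,b;c,d] with hM
  have hN : (M - 1) * (M - 1) = 0 := by
    rw [hM, Matrix.one_fin_two]
    ext i j
    fin_cases i <;> fin_cases j <;>
      simp [Matrix.mul_apply, Fin.sum_univ_two, Matrix.sub_apply] <;>
      first
        | linear_combination (-1)*hδ + a*ht
        | linear_combination (-1)*hδ + d*ht
        | linear_combination hδ + a*ht
        | linear_combination hδ + d*ht
        | linear_combination b*ht
        | linear_combination c*ht
        | linear_combination (-b)*ht
        | linear_combination (-c)*ht
  have h2 : (1 : Matrix (Fin 2) (Fin 2) ℤ) + (M - 1) = M := by abel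
  have h3 := nilpow (M - 1) hN n
  rw [h2, hAn] at h3
  have h4 : (n:ℤ) • (M - 1) = 0 := by
    have h5 := h3.symm
    rwa [add_eq_left] at h5
  rcases smul_eq_zero.1 h4 with h5 | h5
  · exact absurd h5 (Int.natCast_ne_zero.2 (by omega))
  · exact sub_eq_zero.1 h5

/-- trace -2, det 1, finite order : must be minus the identity. -/
lemma case_negid (a b c d : ℤ) (hδ : a*d - b*c = 1) (ht : a + d = -2)
    (n : ℕ) (hn : 0 < n) (hAn : (!![a,b;c,d] : Matrix (Fin 2) (Fin 2) ℤ)^n = 1) :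
    (!![a,b;c,d] : Matrix (Fin 2) (Fin 2) ℤ) = -1 := by
  set M : Matrix (Fin 2) (Fin 2) ℤ := !![a,b;c,d] with hM
  have hN : (-M - 1) * (-M - 1) = 0 := by
    rw [hM, Matrix.one_fin_two]
    ext i j
    fin_cases i <;> fin_cases j <;>
      simp [Matrix.mul_apply, Fin.sum_univ_two, Matrix.sub_apply, Matrix.neg_apply] <;>
      first
        | linear_combination (-1)*hδ + a*ht
        | linear_combination (-1)*hδ + d*ht
        | linear_combination hδ + a*ht
        | linear_combination hδ + d*ht
        | linear_combination b*ht
        | linear_combination c*ht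
        | linear_combination (-b)*ht
        | linear_combination (-c)*ht
  have h2 : (1 : Matrix (Fin 2) (Fin 2) ℤ) + (-M - 1) = -M := by abel
  have h3 := nilpow (-M - 1) hN (2*n)
  rw [h2] at h3
  have h5 : (-M)^(2*n) = 1 := by
    rw [(even_two_mul n).neg_pow, mul_comm, pow_mul, hAn, one_pow]
  rw [h5] at h3
  have h4 : ((2*n : ℕ):ℤ) • (-M - 1) = 0 := by
    have h6 := h3.symm
    rwa [add_eq_left] at h6
  rcases smul_eq_zero.1 h4 with h6 | h6
  · exact absurd h6 (Int.natCast_ne_zero.2 (by omega))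
  · calc M = -(-M - 1) - 1 := by abel
    _ = -1 := by rw [h6]; simp

end Nilpotent

section Main

lemma exists_rep (A : Matrix (Fin 2) (Fin 2) ℤ) (hU : IsUnit A) (hA1 : A ≠ 1)
    (n : ℕ) (hn : 0 < n) (hAn : A ^ n = 1) : ∃ i : Fin 6, ZSimilar A (periodicReps i) := by
  obtain ⟨a, b, c, d, rfl⟩ : ∃ a b c d, A = !![a,b;c,d] := ⟨_,_,_,_, Matrix.eta_fin_two A⟩
  have hδ' : a*d - b*c = 1 ∨ a*d - b*c = -1 := by
    have h2 := (Matrix.isUnit_iff_isUnit_det _).1 hU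
    rw [Matrix.det_fin_two_of] at h2
    exact Int.isUnit_iff.1 h2
  have hn1 : n ≠ 1 := by
    rintro rfl
    rw [pow_one] at hAn
    exact hA1 hAn
  have hn2 : 2 ≤ n := by omega
  have htrace : Matrix.trace !![a,b;c,d] = a + d := by rw [Matrix.trace_fin_two_of]
  have hCH := CH2 a b c d
  rcases hδ' with hδ | hδ
  · have hcases : a + d = -2 ∨ a + d = -1 ∨ a + d = 0 ∨ a + d = 1 ∨ a + d = 2 ∨
        (3 ≤ a + d ∨ a + d ≤ -3) := by omega
    rcases hcases with ht|ht|ht|ht|ht|ht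
    · refine ⟨0, zsim_of 1 (by simp) ?_⟩
      rw [Matrix.one_mul, Matrix.mul_one, case_negid a b c d hδ ht n hn hAn]
      decide
    · exact ⟨4, case_ord3 a b c d hδ ht⟩
    · exact ⟨3, case_ord4 a b c d hδ ht⟩
    · exact ⟨5, case_ord6 a b c d hδ ht⟩
    · exact absurd (case_unip a b c d hδ ht n hn hAn) hA1
    · exfalso
      refine traceBound _ (a+d) 1 ?_ htrace (Or.inl ⟨rfl, by omega⟩) n hn2 hAn
      rw [hCH, hδ]
  · rcases eq_or_ne (a + d) 0 with ht | ht
    · rcases case_refl a b c d hδ ht with h | h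
      · exact ⟨1, h⟩
      · exact ⟨2, h⟩
    · exfalso
      refine traceBound _ (a+d) (-1) ?_ htrace (Or.inr ⟨rfl, ht⟩) n hn2 hAn
      rw [hCH, hδ]

lemma not_mod2 : ¬ ∃ C : Matrix (Fin 2) (Fin 2) ℤ, !![1,1;0,-1] = 1 + 2 • C := by
  rintro ⟨C, hC⟩
  have h01 := congrFun (congrFun hC 0) 1
  rw [Matrix.add_apply, Matrix.smul_apply, Matrix.one_apply_ne (by decide)] at h01
  have h2 : !![1,(1:ℤ);0,-1] 0 1 = 1 := by decide
  rw [h2, nsmul_eq_mul] at h01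
  omega

lemma rep_mod2 : (!![1,0;0,-1] : Matrix (Fin 2) (Fin 2) ℤ) = 1 + 2 • !![0,0;0,-1] := by
  ext i j
  fin_cases i <;> fin_cases j <;> simp [Matrix.one_apply, nsmul_eq_mul]

lemma rep_pairwise : ∀ i j : Fin 6, i ≠ j → ¬ ZSimilar (periodicReps i) (periodicReps j) := by
  have h12 : ¬ ZSimilar !![1,0;0,-1] !![1,1;0,-1] := by
    intro h2
    exact not_mod2 (zsim_mod2 h2 ⟨!![0,0;0,-1], rep_mod2⟩)
  intro i j hij h
  have htr := zsim_trace h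
  have hdt := zsim_det h
  have T : ∀ k : Fin 6, (periodicReps k).trace = ![-2,0,0,0,-1,1] k := by decide
  have D : ∀ k : Fin 6, (periodicReps k).det = ![1,-1,-1,1,1,1] k := by decide
  rw [T i, T j] at htr
  rw [D i, D j] at hdt
  have hor : (i = 1 ∧ j = 2) ∨ (i = 2 ∧ j = 1) := by
    clear h h12 T D
    fin_cases i <;> fin_cases j <;> revert htr hdt hij <;> decide
  have e1 : periodicReps 1 = !![1,0;0,-1] := rfl
  have e2 : periodicReps 2 = !![1,1;0,-1] := rfl
  rcases hor with ⟨rfl, rfl⟩ | ⟨rfl, rfl⟩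
  · rw [e1, e2] at h; exact h12 h
  · rw [e1, e2] at h; exact h12 (zsim_symm h)

end Main

theorem stmt_19 :
    (∀ A : Matrix (Fin 2) (Fin 2) ℤ, IsUnit A → A ≠ 1 → (∃ n : ℕ, 0 < n ∧ A ^ n = 1) →
      ∃! i : Fin 6, ZSimilar A (periodicReps i)) ∧
    (∀ i j : Fin 6, i ≠ j → ¬ ZSimilar (periodicReps i) (periodicReps j)) ∧
    orderOf (periodicReps 0) = 2 ∧ orderOf (periodicReps 1) = 2 ∧
    orderOf (periodicReps 2) = 2 ∧ orderOf (periodicReps 3) = 4 ∧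
    orderOf (periodicReps 4) = 3 ∧ orderOf (periodicReps 5) = 6 := by
  refine ⟨?_, rep_pairwise, orderOf_eq_prime (by decide) (by decide),
    orderOf_eq_prime (by decide) (by decide), orderOf_eq_prime (by decide) (by decide),
    orderOf_eq_prime_pow (p := 2) (n := 1) (by decide) (by decide),
    orderOf_eq_prime (by decide) (by decide), ?_⟩
  · rintro A hU hA1 ⟨n, hn, hAn⟩
    obtain ⟨i, hi⟩ := exists_rep A hU hA1 n hn hAn
    refine ⟨i, hi, fun j hj => ?_⟩
    by_contra hne
    exact rep_pairwise j i hne (zsim_trans (zsim_symm hj) hi)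
  · apply orderOf_eq_of_pow_and_pow_div_prime (by norm_num) (by decide)
    intro p hp hdvd
    have h6 : p = 2 ∨ p = 3 := by
      have := Nat.le_of_dvd (by norm_num) hdvd
      interval_cases p <;> revert hp hdvd <;> decide
    rcases h6 with rfl | rfl <;> decide
end
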